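/- Let l ≥ 2 and (m_1,…,m_l) = (1,0,…,0) (a one followed by l−1 zeros), and let b > 0 and x > 0 be such that H_{m_1,…,m_l}(x+b) is defined. (i) If 0 < b < 1 and 0 < x < 1−b, then H_{m_1,…,m_l}(x+b) = H_{m_1,…,m_l}(b) + Σ_{j=1}^{l} H_{m_1−b,…,m_j−b}(x) · H_{m_{j+1},…,m_l}(b). (ii) If b ≥ 1, then H_{m_1,…,m_l}(x+b) = H_{m_1,…,m_l}(b) − Σ_{j=1}^{l} H_{m_1−b,…,m_j−b}(x) · H_{m_{j+1},…,m_l}(b). In both cases the j = l term is ±H_{m_1−b,…,m_l−b}(x) and the empty polylogarithm at b equals 1. -/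

import Mathlib

open scoped Classical
open MeasureTheory intervalIntegral Filter

/-- The weight-one integrand: `f_0(x) = 1/x` and `f_a(x) = 1/(|a| − sign(a)·x)` for `a ≠ 0`. -/
noncomputable def GHf (a x : ℝ) : ℝ :=
  if a = 0 then 1 / x else 1 / (|a| - Real.sign a * x)

/-- The generalized harmonic polylogarithm `H_{m₁,…,m_w}(x)`: `1` for the empty word,
`(log x)^w / w!` for the all-zero word (note `Real.log` of a negative number equals the
log of its absolute value), and otherwise the oriented iterated integral
`∫_0^x f_{m₁}(y) H_{m₂,…,m_w}(y) dy`. -/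
noncomputable def GH : List ℝ → ℝ → ℝ
  | [], _ => 1
  | m :: p, x =>
    if m = 0 ∧ ∀ y ∈ p, y = (0:ℝ) then
      Real.log x ^ (p.length + 1) / ((p.length + 1).factorial : ℝ)
    else ∫ y in (0:ℝ)..x, GHf m y * GH p y

/-- `GHDef m⃗ x` states that the generalized harmonic polylogarithm `H_{m⃗}(x)` is
defined, i.e. all occurring iterated integrals converge. -/
def GHDef : List ℝ → ℝ → Prop
  | [], _ => True
  | m :: p, x =>
    (m = 0 ∧ ∀ y ∈ p, y = (0:ℝ)) ∨
    ((∀ y ∈ Set.uIoc (0:ℝ) x, GHDef p y) ∧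
      IntervalIntegrable (fun y => GHf m y * GH p y) MeasureTheory.volume 0 x)

/-! Substituting `y = u + b` gives `H_{1,0^t}(x+b) = H_{1,0^t}(b) + ∫_0^x f_1(u+b) log(u+b)^t/t! du`,
and `f_1(u+b) = ±f_{1-b}(u)`, with the sign `+` exactly when `b < 1`. Writing
`log(u+b) = log((u+b)/b) + log b` and expanding binomially, the `j`-th term integrates to
`H_{1-b,(-b)^j}(x) · H_{0^{t-j}}(b)`, because `H_{(-b)^j}(u) = log((u+b)/b)^j/j!`. For `b = 1`
this term-by-term integration breaks down at `j = 0` (`f_0` is not integrable at `0`), but there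
`log b = 0` and only the term `j = t` survives. -/

lemma add_pow_div_factorial {K : Type*} [Field K] [CharZero K] (A B : K) (t : ℕ) :
    (A + B) ^ t / t.factorial =
      ∑ j ∈ Finset.range (t + 1), A ^ j / j.factorial * (B ^ (t - j) / (t - j).factorial) := by
  rw [add_pow, Finset.sum_div]
  refine Finset.sum_congr rfl fun j hj => ?_
  have hjt := Nat.le_of_lt_succ (Finset.mem_range.1 hj)
  have ht : (t.factorial : K) ≠ 0 := Nat.cast_ne_zero.2 t.factorial_ne_zero
  rw [Nat.cast_choose K hjt]
  field_simp

lemma GHf_of_ne_zero {a : ℝ} (ha : a ≠ 0) (y : ℝ) : GHf a y = Real.sign a / (a - y) := by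
  rw [GHf, if_neg ha]
  rcases ha.lt_or_gt with ha | ha
  · rw [abs_of_neg ha, Real.sign_of_neg ha, show -a - -1 * y = -(a - y) by ring, div_neg,
      neg_div]
  · rw [abs_of_pos ha, Real.sign_of_pos ha]
    ring

lemma GHf_neg {b : ℝ} (hb : 0 < b) (y : ℝ) : GHf (-b) y = (y + b)⁻¹ := by
  rw [GHf_of_ne_zero (neg_ne_zero.2 hb.ne'), Real.sign_of_neg (neg_neg_of_pos hb),
    show -b - y = -(y + b) by ring, div_neg, neg_div, neg_neg, one_div]

lemma GHf_add_of_pos {a : ℝ} (ha : 0 < a) (b y : ℝ) :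
    GHf a (y + b) = (if b < a then 1 else -1) * GHf (a - b) y := by
  rw [GHf_of_ne_zero ha.ne', Real.sign_of_pos ha]
  rcases lt_trichotomy b a with h | rfl | h
  · rw [if_pos h, GHf_of_ne_zero (sub_ne_zero.2 h.ne'), Real.sign_of_pos (sub_pos.2 h)]
    ring
  · rw [if_neg (lt_irrefl b), sub_self, GHf, if_pos rfl, show b - (y + b) = -y by ring, div_neg]
    ring
  · rw [if_neg (not_lt.2 h.le), GHf_of_ne_zero (sub_ne_zero.2 h.ne),
      Real.sign_of_neg (sub_neg.2 h)]
    ring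

lemma GH_replicate_zero (n : ℕ) (y : ℝ) :
    GH (List.replicate n 0) y = Real.log y ^ n / n.factorial := by
  cases n with
  | zero => simp [GH]
  | succ n =>
    rw [List.replicate_succ, GH, if_pos ⟨rfl, fun z hz => List.eq_of_mem_replicate hz⟩]
    simp

lemma GH_cons_of_ne_zero {m : ℝ} (hm : m ≠ 0) (p : List ℝ) (x : ℝ) :
    GH (m :: p) x = ∫ y in (0:ℝ)..x, GHf m y * GH p y := by
  rw [GH, if_neg fun h => hm h.1]

lemma GHDef.intervalIntegrable {m : ℝ} {p : List ℝ} {x : ℝ} (h : GHDef (m :: p) x)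
    (hm : m ≠ 0) : IntervalIntegrable (fun y => GHf m y * GH p y) volume 0 x := by
  rcases h with h | h
  · exact absurd h.1 hm
  · exact h.2

lemma neg_lt_of_mem_uIcc {b y s : ℝ} (hb : 0 < b) (hy : -b < y) (hs : s ∈ Set.uIcc 0 y) :
    -b < s := by
  rcases Set.mem_uIcc.1 hs with hs | hs <;> linarith [hs.1]

lemma hasDerivAt_log_add_sub_log_pow_div_factorial {b s : ℝ} (hs : 0 < s + b) (k : ℕ) :
    HasDerivAt (fun z => (Real.log (z + b) - Real.log b) ^ (k + 1) / (k + 1).factorial)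
      ((s + b)⁻¹ * ((Real.log (s + b) - Real.log b) ^ k / k.factorial)) s := by
  have hlog : HasDerivAt (fun z => Real.log (z + b) - Real.log b) (s + b)⁻¹ s := by
    simpa using (((hasDerivAt_id s).add_const b).log hs.ne').sub_const (Real.log b)
  refine ((hlog.pow (k + 1)).div_const ((k + 1).factorial : ℝ)).congr_deriv ?_
  rw [Nat.factorial_succ, Nat.add_sub_cancel]
  push_cast
  field_simp

lemma GH_replicate_neg {b : ℝ} (hb : 0 < b) (k : ℕ) {y : ℝ} (hy : -b < y) :
    GH (List.replicate k (-b)) y = (Real.log (y + b) - Real.log b) ^ k / k.factorial := by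
  induction k generalizing y with
  | zero => simp [GH]
  | succ k ih =>
    have hpos : ∀ s ∈ Set.uIcc 0 y, 0 < s + b := fun s hs => by
      linarith [neg_lt_of_mem_uIcc hb hy hs]
    rw [List.replicate_succ, GH_cons_of_ne_zero (neg_ne_zero.2 hb.ne'),
      intervalIntegral.integral_congr (g := fun s =>
        (s + b)⁻¹ * ((Real.log (s + b) - Real.log b) ^ k / k.factorial)) fun s hs => by
          rw [GHf_neg hb, ih (neg_lt_of_mem_uIcc hb hy hs)],
      integral_eq_sub_of_hasDerivAt
        (fun s hs => hasDerivAt_log_add_sub_log_pow_div_factorial (hpos s hs) k)]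
    · simp
    · refine ContinuousOn.intervalIntegrable fun s hs => ?_
      have := (hpos s hs).ne'
      exact ContinuousAt.continuousWithinAt (by fun_prop (disch := assumption))

lemma GH_cons_add {m : ℝ} (hm : m ≠ 0) (p : List ℝ) {b x : ℝ} (hb : 0 ≤ b) (hx : 0 ≤ x)
    (hint : IntervalIntegrable (fun y => GHf m y * GH p y) volume 0 (x + b)) :
    GH (m :: p) (x + b) = GH (m :: p) b + ∫ u in (0:ℝ)..x, GHf m (u + b) * GH p (u + b) := by
  have hb' : b ∈ Set.uIcc 0 (x + b) := Set.mem_uIcc_of_le hb (by linarith)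
  rw [GH_cons_of_ne_zero hm, GH_cons_of_ne_zero hm,
    intervalIntegral.integral_comp_add_right (fun u => GHf m u * GH p u), zero_add,
    integral_add_adjacent_intervals (hint.mono_set (Set.uIcc_subset_uIcc_left hb'))
      (hint.mono_set (Set.uIcc_subset_uIcc_right hb'))]

lemma sum_GH_shift_eq_integral {a b x : ℝ} (hb : 0 < b) (hx : 0 ≤ x)
    (hpole : a - b ∉ Set.Icc 0 x) (t : ℕ) :
    ∑ j ∈ Finset.range (t + 1),
        GH ((a - b) :: List.replicate j (-b)) x * GH (List.replicate (t - j) 0) b =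
      ∫ u in (0:ℝ)..x, GHf (a - b) u * GH (List.replicate t 0) (u + b) := by
  have hab : a - b ≠ 0 := fun h => hpole (by rw [h]; exact ⟨le_rfl, hx⟩)
  set L : ℝ → ℝ := fun u => Real.log (u + b) - Real.log b
  have hcont : ∀ j : ℕ, ContinuousOn
      (fun u => GHf (a - b) u * (L u ^ j / j.factorial)) (Set.uIcc 0 x) := fun j u hu => by
    rw [Set.uIcc_of_le hx] at hu
    have h1 : a - b - u ≠ 0 := sub_ne_zero.2 fun h => hpole (h ▸ hu)
    have h2 : u + b ≠ 0 := by linarith [hu.1]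
    simp only [GHf_of_ne_zero hab, L]
    exact ContinuousAt.continuousWithinAt (by fun_prop (disch := assumption))
  calc ∑ j ∈ Finset.range (t + 1),
        GH ((a - b) :: List.replicate j (-b)) x * GH (List.replicate (t - j) 0) b
      = ∑ j ∈ Finset.range (t + 1), ∫ u in (0:ℝ)..x,
          GHf (a - b) u * (L u ^ j / j.factorial) *
            (Real.log b ^ (t - j) / (t - j).factorial) := by
        refine Finset.sum_congr rfl fun j _ => ?_
        rw [GH_cons_of_ne_zero hab, GH_replicate_zero, ← intervalIntegral.integral_mul_const]
        refine intervalIntegral.integral_congr fun u hu => ?_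
        rw [GH_replicate_neg hb j (neg_lt_of_mem_uIcc hb (by linarith) hu)]
    _ = ∫ u in (0:ℝ)..x, ∑ j ∈ Finset.range (t + 1),
          GHf (a - b) u * (L u ^ j / j.factorial) *
            (Real.log b ^ (t - j) / (t - j).factorial) :=
        (integral_finsetSum fun j _ =>
          ((hcont j).mul continuousOn_const).intervalIntegrable).symm
    _ = ∫ u in (0:ℝ)..x, GHf (a - b) u * GH (List.replicate t 0) (u + b) := by
        refine intervalIntegral.integral_congr fun u _ => ?_
        have hbinom := add_pow_div_factorial (L u) (Real.log b) t
        rw [sub_add_cancel] at hbinom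
        simp only [GH_replicate_zero, hbinom, Finset.mul_sum, mul_assoc]

lemma sum_GH_shift_eq_integral_of_eq_one {x : ℝ} (hx : -1 < x) {t : ℕ} (ht : 1 ≤ t) :
    ∑ j ∈ Finset.range (t + 1),
        GH ((0:ℝ) :: List.replicate j (-1)) x * GH (List.replicate (t - j) 0) 1 =
      ∫ u in (0:ℝ)..x, GHf 0 u * GH (List.replicate t 0) (u + 1) := by
  have hvanish : ∀ j ∈ Finset.range (t + 1), j ≠ t →
      GH ((0:ℝ) :: List.replicate j (-1)) x * GH (List.replicate (t - j) 0) 1 = 0 :=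
    fun j hj hjt => by
      rw [GH_replicate_zero, Real.log_one,
        zero_pow (by have := Finset.mem_range.1 hj; omega), zero_div, mul_zero]
  rw [Finset.sum_eq_single_of_mem t (Finset.self_mem_range_succ t) hvanish, Nat.sub_self, List.replicate_zero, GH, mul_one, GH,
    if_neg fun h => by simpa using h.2 (-1) (List.mem_replicate.2 ⟨by omega, rfl⟩)]
  refine intervalIntegral.integral_congr fun u hu => ?_
  rw [GH_replicate_neg one_pos t (neg_lt_of_mem_uIcc one_pos hx hu), GH_replicate_zero,
    Real.log_one, sub_zero]

theorem GH_one_replicate_zero_add {t : ℕ} (ht : 1 ≤ t) {b x : ℝ} (hb : 0 < b) (hx : 0 ≤ x)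
    (hdef : GHDef ((1:ℝ) :: List.replicate t 0) (x + b))
    (hpole : b = 1 ∨ 1 - b ∉ Set.Icc 0 x) :
    GH ((1:ℝ) :: List.replicate t 0) (x + b) = GH ((1:ℝ) :: List.replicate t 0) b +
      (if b < 1 then 1 else -1) * ∑ j ∈ Finset.range (t + 1),
        GH ((1 - b) :: List.replicate j (-b)) x * GH (List.replicate (t - j) 0) b := by
  rw [GH_cons_add one_ne_zero _ hb.le hx (hdef.intervalIntegrable one_ne_zero)]
  simp only [GHf_add_of_pos one_pos, mul_assoc, intervalIntegral.integral_const_mul]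
  congr 2
  rcases hpole with rfl | hpole
  · simpa using (sum_GH_shift_eq_integral_of_eq_one (by linarith) ht).symm
  · exact (sum_GH_shift_eq_integral hb hx hpole t).symm

/-- Argument shift `x + b → x` for the word `(1,0,…,0)` of length `l = t + 1 ≥ 2`:
(i) if `0 < b < 1` and `0 < x < 1 − b`, then
`H(x+b) = Σ_{j=0}^{l} H_{m₁−b,…,m_j−b}(x) · H_{m_{j+1},…,m_l}(b)`;
(ii) if `b ≥ 1`, then
`H(x+b) = H(b) − Σ_{j=1}^{l} H_{m₁−b,…,m_j−b}(x) · H_{m_{j+1},…,m_l}(b)`. -/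
theorem gh_shift_plus_b_word_one_zeros (t : ℕ) (ht : 1 ≤ t) (b : ℝ) (hb : 0 < b)
    (x : ℝ) (hx : 0 < x)
    (hdef : GHDef ((1:ℝ) :: List.replicate t 0) (x + b)) :
    (b < 1 → x < 1 - b →
      GH ((1:ℝ) :: List.replicate t 0) (x + b) =
        ∑ j ∈ Finset.range (t + 2),
          GH ((((1:ℝ) :: List.replicate t 0).take j).map (fun m => m - b)) x *
            GH (((1:ℝ) :: List.replicate t 0).drop j) b) ∧
    (1 ≤ b →
      GH ((1:ℝ) :: List.replicate t 0) (x + b) =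
        GH ((1:ℝ) :: List.replicate t 0) b -
          ∑ j ∈ Finset.range (t + 1),
            GH ((((1:ℝ) :: List.replicate t 0).take (j + 1)).map (fun m => m - b)) x *
              GH (((1:ℝ) :: List.replicate t 0).drop (j + 1)) b) := by
  have hterms : ∀ j ∈ Finset.range (t + 1),
      GH ((((1:ℝ) :: List.replicate t 0).take (j + 1)).map (fun m => m - b)) x *
          GH (((1:ℝ) :: List.replicate t 0).drop (j + 1)) b =
        GH ((1 - b) :: List.replicate j (-b)) x * GH (List.replicate (t - j) 0) b :=
    fun j hj => by
      have hjt : j ≤ t := Nat.le_of_lt_succ (Finset.mem_range.1 hj)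
      simp [List.take_replicate, hjt]
  rw [Finset.sum_congr rfl hterms]
  constructor
  · intro hb1 hxb
    have hpole : 1 - b ∉ Set.Icc 0 x := fun h => by linarith [h.2]
    rw [Finset.sum_range_succ', Finset.sum_congr rfl hterms,
      GH_one_replicate_zero_add ht hb hx.le hdef (Or.inr hpole), if_pos hb1]
    simp [GH, add_comm]
  · intro hb1
    have hpole : b = 1 ∨ 1 - b ∉ Set.Icc 0 x :=
      hb1.eq_or_lt.imp Eq.symm fun h hm => by linarith [hm.1]
    rw [GH_one_replicate_zero_add ht hb hx.le hdef hpole, if_neg (not_lt.2 hb1)]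
    ring
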